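/- arXiv:1901.00581 — 2 statements merged into one kernel-verified Lean document; each statement's English description precedes it below -/
import Mathlib

section
/- Let 𝒦 ⊂ ℝ³ be an open cone (closed under positive scalar multiplication), let d be a unit vector and c > 0 a constant such that d·θ ≤ −c for every unit vector θ ∈ 𝒦, and let α ∈ (0,1), τ > 0. Then ∫_𝒦 |x|^α e^{τ d·x} dx ≤ τ^{−(3+α)} ∫_𝒦 |y|^α e^{d·y} dy, and the right-hand side is bounded by 2π Γ(3+α)/c^{3+α}; in particular both integrals are finite. -/
/-!
Since `𝒦` is a cone, the substitution `x = τ y` maps `𝒦` onto itself, which produces the factor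
`τ^{-(3+α)}`. On `𝒦` the condition `d·x ≤ -c|x|` bounds the integrand by the radial function
`|x|^α e^{-c|x|}`, whose integral over `ℝ³` is `4π Γ(3+α)/c^{3+α}`; it also puts `𝒦` inside the
half-space `{d·x ≤ 0}`, which carries exactly half of that integral by the symmetry `x ↦ -x`.
-/

open MeasureTheory Filter Set

noncomputable section

/-- Euclidean (bilinear) dot product on `ℝ³`. -/
def dotR (x y : Fin 3 → ℝ) : ℝ := ∑ i, x i * y i

/-- ℂ-bilinear (non-conjugated) dot product on `ℂ³`. -/
def dotC (x y : Fin 3 → ℂ) : ℂ := ∑ i, x i * y i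

/-- Euclidean norm on `ℝ³` (the Pi-type sup norm is not the Euclidean one). -/
def nrm (x : Fin 3 → ℝ) : ℝ := Real.sqrt (∑ i, (x i) ^ 2)

/-- Inclusion `ℝ³ ↪ ℂ³`. -/
def toC (x : Fin 3 → ℝ) : Fin 3 → ℂ := fun i => (x i : ℂ)

open Real Metric Module
open scoped InnerProductSpace Pointwise

theorem Real.pow_smul_rpow_mul_exp_eqOn {n : ℕ} (hn : 0 < n) (α c : ℝ) :
    EqOn (fun y : ℝ => y ^ (n - 1) • (y ^ α * exp (-(c * y))))
      (fun y => y ^ (n + α - 1) * exp (-(c * y))) (Ioi 0) := by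
  intro y hy
  have : (n : ℝ) + α - 1 = ((n - 1 : ℕ) : ℝ) + α := by push_cast [Nat.cast_sub hn]; ring
  simp only [smul_eq_mul, this, rpow_add hy, rpow_natCast]
  ring

section Radial

variable {E : Type*} [NormedAddCommGroup E] [NormedSpace ℝ E] [FiniteDimensional ℝ E]
  [MeasurableSpace E] [BorelSpace E] [Nontrivial E] (μ : Measure E) [μ.IsAddHaarMeasure]
  {α c : ℝ}

theorem integrable_norm_rpow_mul_exp_neg_mul_norm (hα : -(finrank ℝ E : ℝ) < α) (hc : 0 < c) :
    Integrable (fun x : E => ‖x‖ ^ α * exp (-(c * ‖x‖))) μ := by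
  rw [integrable_fun_norm_addHaar μ (f := fun y => y ^ α * exp (-(c * y)))]
  refine IntegrableOn.congr_fun ?_ (pow_smul_rpow_mul_exp_eqOn finrank_pos α c).symm
    measurableSet_Ioi
  simpa [neg_mul] using
    integrableOn_rpow_mul_exp_neg_mul_rpow (s := finrank ℝ E + α - 1) (by linarith) one_pos hc

theorem integral_norm_rpow_mul_exp_neg_mul_norm (hα : -(finrank ℝ E : ℝ) < α) (hc : 0 < c) :
    ∫ x : E, ‖x‖ ^ α * exp (-(c * ‖x‖)) ∂μ
      = finrank ℝ E * μ.real (ball 0 1) * Gamma (finrank ℝ E + α) / c ^ (finrank ℝ E + α) := by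
  rw [integral_fun_norm_addHaar μ (fun y => y ^ α * exp (-(c * y))),
    setIntegral_congr_fun measurableSet_Ioi (pow_smul_rpow_mul_exp_eqOn finrank_pos α c),
    integral_rpow_mul_exp_neg_mul_Ioi (by linarith) hc, one_div, inv_rpow hc.le, nsmul_eq_mul,
    smul_eq_mul]
  field_simp

end Radial

theorem EuclideanSpace.integral_norm_rpow_mul_exp_neg_mul_norm_fin_three {α c : ℝ}
    (hα : -3 < α) (hc : 0 < c) :
    ∫ x : EuclideanSpace ℝ (Fin 3), ‖x‖ ^ α * exp (-(c * ‖x‖))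
      = 4 * π * Gamma (3 + α) / c ^ (3 + α) := by
  rw [integral_norm_rpow_mul_exp_neg_mul_norm _ (by simpa using hα) hc]
  simp only [finrank_euclideanSpace_fin, measureReal_def, volume_ball_fin_three]
  rw [ENNReal.toReal_mul, ENNReal.toReal_pow, ENNReal.toReal_ofReal zero_le_one,
    ENNReal.toReal_ofReal (by positivity)]
  push_cast
  ring

section HalfSpace

variable {E : Type*} [NormedAddCommGroup E] [InnerProductSpace ℝ E] [FiniteDimensional ℝ E]
  [MeasurableSpace E] [BorelSpace E] (μ : Measure E) [μ.IsAddHaarMeasure] {v : E}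

theorem measure_inner_eq_zero (hv : v ≠ 0) : μ {x | ⟪v, x⟫_ℝ = 0} = 0 := by
  have hker : {x | ⟪v, x⟫_ℝ = 0} = (LinearMap.ker (innerₛₗ ℝ v) : Set E) := rfl
  rw [hker]
  refine Measure.addHaar_submodule μ _ fun htop => hv ?_
  have hv_mem : v ∈ LinearMap.ker (innerₛₗ ℝ v) := htop ▸ Submodule.mem_top
  exact inner_self_eq_zero.mp hv_mem

theorem setIntegral_inner_nonpos_of_even {f : E → ℝ} (hf : Integrable f μ)
    (hf_even : ∀ x, f (-x) = f x) (hv : v ≠ 0) :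
    ∫ x in {x | ⟪v, x⟫_ℝ ≤ 0}, f x ∂μ = (∫ x, f x ∂μ) / 2 := by
  have hcont : Continuous fun x : E => ⟪v, x⟫_ℝ := continuous_const.inner continuous_id
  have hneg : ∫ x in {x | 0 ≤ ⟪v, x⟫_ℝ}, f x ∂μ = ∫ x in {x | ⟪v, x⟫_ℝ ≤ 0}, f x ∂μ := by
    rw [← (Measure.measurePreserving_neg μ).setIntegral_preimage_emb
      (Homeomorph.neg E).measurableEmbedding]
    simp [inner_neg_right, hf_even]
  have hunion := setIntegral_union₀ (μ := μ) (f := f)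
    (s := {x | ⟪v, x⟫_ℝ ≤ 0}) (t := {x | 0 ≤ ⟪v, x⟫_ℝ}) ?_
    (isClosed_le continuous_const hcont).measurableSet.nullMeasurableSet
    hf.integrableOn hf.integrableOn
  · rw [show {x | ⟪v, x⟫_ℝ ≤ 0} ∪ {x | 0 ≤ ⟪v, x⟫_ℝ} = univ from
      eq_univ_of_forall fun x => le_total (⟪v, x⟫_ℝ) 0, Measure.restrict_univ, hneg] at hunion
    linarith
  · refine measure_mono_null (fun x hx => ?_) (measure_inner_eq_zero μ hv)
    exact le_antisymm hx.1 hx.2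

end HalfSpace

def IsCone {E : Type*} [SMul ℝ E] (K : Set E) : Prop := ∀ x ∈ K, ∀ l : ℝ, 0 < l → l • x ∈ K

theorem IsCone.smul_set_eq {E : Type*} [AddCommGroup E] [Module ℝ E] {K : Set E} (hK : IsCone K)
    {τ : ℝ} (hτ : 0 < τ) : τ • K = K := by
  refine (smul_set_subset_iff.2 fun x hx => hK x hx τ hτ).antisymm fun y hy => ?_
  exact ⟨τ⁻¹ • y, hK y hy τ⁻¹ (inv_pos.2 hτ), smul_inv_smul₀ hτ.ne' y⟩

section Weighted

variable {E : Type*} [NormedAddCommGroup E] [InnerProductSpace ℝ E] {K : Set E} {d : E} {α c : ℝ}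

theorem inner_le_neg_mul_norm_of_mem (hdK : ∀ x ∈ K, x ≠ 0 → ⟪d, x⟫_ℝ ≤ -c * ‖x‖) {x : E}
    (hx : x ∈ K) : ⟪d, x⟫_ℝ ≤ -c * ‖x‖ := by
  rcases eq_or_ne x 0 with rfl | hx0
  · simp
  · exact hdK x hx hx0

theorem norm_rpow_mul_exp_inner_le (hdK : ∀ x ∈ K, ⟪d, x⟫_ℝ ≤ -c * ‖x‖) {σ : ℝ} (hσ : 0 ≤ σ)
    {x : E} (hx : x ∈ K) :
    ‖x‖ ^ α * exp (σ * ⟪d, x⟫_ℝ) ≤ ‖x‖ ^ α * exp (-(σ * c * ‖x‖)) := by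
  gcongr
  nlinarith [mul_le_mul_of_nonneg_left (hdK x hx) hσ]

variable [FiniteDimensional ℝ E] [MeasurableSpace E] [BorelSpace E] (μ : Measure E)
  [μ.IsAddHaarMeasure]

theorem IsCone.setIntegral_norm_rpow_mul_exp_inner_smul (hK : IsCone K) {τ : ℝ} (hτ : 0 < τ) :
    ∫ x in K, ‖x‖ ^ α * exp (τ * ⟪d, x⟫_ℝ) ∂μ
      = τ ^ (-(finrank ℝ E + α)) * ∫ x in K, ‖x‖ ^ α * exp ⟪d, x⟫_ℝ ∂μ := by
  have hscale := Measure.setIntegral_comp_smul_of_pos μ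
    (fun x => ‖x‖ ^ α * exp ⟪d, x⟫_ℝ) K hτ
  rw [hK.smul_set_eq hτ] at hscale
  simp only [norm_smul, norm_of_nonneg hτ.le, mul_rpow hτ.le (norm_nonneg _), inner_smul_right,
    mul_assoc, integral_const_mul, smul_eq_mul] at hscale
  rw [neg_add, rpow_add hτ, rpow_neg hτ.le, rpow_neg hτ.le, rpow_natCast, mul_comm (_ ^ _)⁻¹,
    mul_assoc, ← hscale, inv_mul_cancel_left₀ (rpow_pos_of_pos hτ α).ne']

variable [Nontrivial E]

theorem integrableOn_norm_rpow_mul_exp_inner (hKmeas : MeasurableSet K)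
    (hdK : ∀ x ∈ K, ⟪d, x⟫_ℝ ≤ -c * ‖x‖) (hc : 0 < c) (hα : -(finrank ℝ E : ℝ) < α) {σ : ℝ}
    (hσ : 0 < σ) : IntegrableOn (fun x => ‖x‖ ^ α * exp (σ * ⟪d, x⟫_ℝ)) K μ := by
  refine (integrable_norm_rpow_mul_exp_neg_mul_norm μ hα (mul_pos hσ hc)).integrableOn.mono'
    (by fun_prop) ?_
  filter_upwards [ae_restrict_mem hKmeas] with x hx
  rw [norm_of_nonneg (by positivity)]
  exact norm_rpow_mul_exp_inner_le hdK hσ.le hx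

theorem setIntegral_norm_rpow_mul_exp_inner_le (hKmeas : MeasurableSet K) (hd : d ≠ 0)
    (hdK : ∀ x ∈ K, ⟪d, x⟫_ℝ ≤ -c * ‖x‖) (hc : 0 < c) (hα : -(finrank ℝ E : ℝ) < α) :
    ∫ x in K, ‖x‖ ^ α * exp ⟪d, x⟫_ℝ ∂μ
      ≤ (∫ x, ‖x‖ ^ α * exp (-(c * ‖x‖)) ∂μ) / 2 := by
  have hg := integrable_norm_rpow_mul_exp_neg_mul_norm μ hα hc
  have hK_half : K ⊆ {x | ⟪d, x⟫_ℝ ≤ 0} := fun x hx =>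
    (hdK x hx).trans (by nlinarith [norm_nonneg x])
  calc ∫ x in K, ‖x‖ ^ α * exp ⟪d, x⟫_ℝ ∂μ
      ≤ ∫ x in K, ‖x‖ ^ α * exp (-(c * ‖x‖)) ∂μ := by
        refine setIntegral_mono_on ?_ hg.integrableOn hKmeas fun x hx => ?_
        · simpa using integrableOn_norm_rpow_mul_exp_inner μ hKmeas hdK hc hα one_pos
        · simpa using norm_rpow_mul_exp_inner_le hdK zero_le_one hx
    _ ≤ ∫ x in {x | ⟪d, x⟫_ℝ ≤ 0}, ‖x‖ ^ α * exp (-(c * ‖x‖)) ∂μ :=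
        setIntegral_mono_set hg.integrableOn (ae_of_all _ fun x => by positivity)
          hK_half.eventuallyLE
    _ = (∫ x, ‖x‖ ^ α * exp (-(c * ‖x‖)) ∂μ) / 2 :=
        setIntegral_inner_nonpos_of_even μ hg (fun x => by simp) hd

end Weighted

section Transfer

variable {ι : Type*} [Fintype ι] {F : Type*} [NormedAddCommGroup F]
  {g : EuclideanSpace ℝ ι → F} {K : Set (ι → ℝ)}

theorem integrableOn_comp_toLp_iff :
    IntegrableOn (fun x => g (WithLp.toLp 2 x)) K ↔ IntegrableOn g (WithLp.ofLp ⁻¹' K) :=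
  (PiLp.volume_preserving_toLp ι).integrableOn_comp_preimage
    (MeasurableEquiv.toLp 2 (ι → ℝ)).measurableEmbedding (s := WithLp.ofLp ⁻¹' K)

theorem setIntegral_comp_toLp [NormedSpace ℝ F] :
    ∫ x in K, g (WithLp.toLp 2 x) = ∫ y in WithLp.ofLp ⁻¹' K, g y :=
  (PiLp.volume_preserving_toLp ι).setIntegral_preimage_emb
    (MeasurableEquiv.toLp 2 (ι → ℝ)).measurableEmbedding g (WithLp.ofLp ⁻¹' K)

end Transfer

theorem nrm_eq_norm_toLp (x : Fin 3 → ℝ) : nrm x = ‖WithLp.toLp 2 x‖ := by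
  simp [nrm, EuclideanSpace.norm_eq]

theorem dotR_eq_inner_toLp (x y : Fin 3 → ℝ) :
    dotR x y = ⟪WithLp.toLp 2 x, WithLp.toLp 2 y⟫_ℝ := by
  simp [dotR, PiLp.inner_apply, mul_comm]

theorem integrableOn_nrm_rpow_mul_exp_dotR_iff {K : Set (Fin 3 → ℝ)} {d : Fin 3 → ℝ} {α σ : ℝ} :
    IntegrableOn (fun x => nrm x ^ α * exp (σ * dotR d x)) K ↔
      IntegrableOn (fun y => ‖y‖ ^ α * exp (σ * ⟪WithLp.toLp 2 d, y⟫_ℝ)) (WithLp.ofLp ⁻¹' K) := by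
  simp only [nrm_eq_norm_toLp, dotR_eq_inner_toLp]
  exact integrableOn_comp_toLp_iff (g := fun y => ‖y‖ ^ α * exp (σ * ⟪WithLp.toLp 2 d, y⟫_ℝ))

theorem setIntegral_nrm_rpow_mul_exp_dotR (K : Set (Fin 3 → ℝ)) (d : Fin 3 → ℝ) (α σ : ℝ) :
    ∫ x in K, nrm x ^ α * exp (σ * dotR d x)
      = ∫ y in WithLp.ofLp ⁻¹' K, ‖y‖ ^ α * exp (σ * ⟪WithLp.toLp 2 d, y⟫_ℝ) := by
  simp only [nrm_eq_norm_toLp, dotR_eq_inner_toLp]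
  exact setIntegral_comp_toLp (g := fun y => ‖y‖ ^ α * exp (σ * ⟪WithLp.toLp 2 d, y⟫_ℝ))

theorem cone_weighted_exp_decay_general
    (K : Set (Fin 3 → ℝ)) (hKmeas : MeasurableSet K)
    (hKcone : ∀ x ∈ K, ∀ l : ℝ, 0 < l → l • x ∈ K)
    (d : Fin 3 → ℝ) (hd : nrm d = 1)
    (c : ℝ) (hc : 0 < c)
    (hdK : ∀ x ∈ K, x ≠ 0 → dotR d x ≤ -c * nrm x)
    (α : ℝ) (hα0 : 0 < α)
    (τ : ℝ) (hτ : 0 < τ) :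
    IntegrableOn (fun x => nrm x ^ α * Real.exp (τ * dotR d x)) K volume ∧
    IntegrableOn (fun y => nrm y ^ α * Real.exp (dotR d y)) K volume ∧
    (∫ x in K, nrm x ^ α * Real.exp (τ * dotR d x))
      ≤ τ ^ (-(3 + α)) * ∫ y in K, nrm y ^ α * Real.exp (dotR d y) ∧
    (∫ y in K, nrm y ^ α * Real.exp (dotR d y))
      ≤ 2 * Real.pi * Real.Gamma (3 + α) / c ^ (3 + α) := by
  set K' : Set (EuclideanSpace ℝ (Fin 3)) := WithLp.ofLp ⁻¹' K
  set d' : EuclideanSpace ℝ (Fin 3) := WithLp.toLp 2 d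
  have hK' : IsCone K' := fun x hx l hl => hKcone _ hx l hl
  have hK'meas : MeasurableSet K' := hKmeas.preimage (MeasurableEquiv.toLp 2 _).symm.measurable
  have hd' : d' ≠ 0 := by
    rw [← norm_ne_zero_iff, ← nrm_eq_norm_toLp, hd]
    exact one_ne_zero
  have hdK' : ∀ x ∈ K', ⟪d', x⟫_ℝ ≤ -c * ‖x‖ := fun x hx =>
    inner_le_neg_mul_norm_of_mem (fun y hy hy0 => by
      simpa [nrm_eq_norm_toLp, dotR_eq_inner_toLp] using hdK _ hy (by simpa using hy0)) hx
  have hα : -(finrank ℝ (EuclideanSpace ℝ (Fin 3)) : ℝ) < α := by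
    rw [finrank_euclideanSpace_fin]; push_cast; linarith
  have hint (σ : ℝ) (hσ : 0 < σ) := integrableOn_nrm_rpow_mul_exp_dotR_iff.2
    (integrableOn_norm_rpow_mul_exp_inner volume hK'meas hdK' hc hα hσ)
  have hI1 := setIntegral_nrm_rpow_mul_exp_dotR K d α 1
  simp only [one_mul] at hI1
  refine ⟨hint τ hτ, by simpa using hint 1 one_pos, ?_, ?_⟩
  · have hscale := hK'.setIntegral_norm_rpow_mul_exp_inner_smul volume hτ (d := d') (α := α)
    rw [finrank_euclideanSpace_fin, Nat.cast_ofNat] at hscale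
    rw [setIntegral_nrm_rpow_mul_exp_dotR, hI1]
    exact hscale.le
  · rw [hI1]
    calc ∫ y in K', ‖y‖ ^ α * exp ⟪d', y⟫_ℝ
        ≤ (∫ x : EuclideanSpace ℝ (Fin 3), ‖x‖ ^ α * exp (-(c * ‖x‖))) / 2 :=
          setIntegral_norm_rpow_mul_exp_inner_le volume hK'meas hd' hdK' hc hα
      _ = 2 * π * Gamma (3 + α) / c ^ (3 + α) := by
          rw [EuclideanSpace.integral_norm_rpow_mul_exp_neg_mul_norm_fin_three (by linarith) hc]
          ring

/-- decay estimate `∫_𝒦 |x|^α e^{τ d·x} dx ≤ τ^{-(3+α)} ∫_𝒦 |y|^α e^{d·y} dy`,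
with the latter bounded by `2π Γ(3+α)/c^{3+α}`; in particular both integrals are finite. -/
theorem cone_weighted_exp_decay
    (K : Set (Fin 3 → ℝ)) (hKmeas : MeasurableSet K)
    (hKcone : ∀ x ∈ K, ∀ l : ℝ, 0 < l → l • x ∈ K)
    (d : Fin 3 → ℝ) (hd : nrm d = 1)
    (c : ℝ) (hc : 0 < c)
    (hdK : ∀ x ∈ K, x ≠ 0 → dotR d x ≤ -c * nrm x)
    (α : ℝ) (hα0 : 0 < α) (hα1 : α < 1)
    (τ : ℝ) (hτ : 0 < τ) :
    IntegrableOn (fun x => nrm x ^ α * Real.exp (τ * dotR d x)) K volume ∧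
    IntegrableOn (fun y => nrm y ^ α * Real.exp (dotR d y)) K volume ∧
    (∫ x in K, nrm x ^ α * Real.exp (τ * dotR d x))
      ≤ τ ^ (-(3 + α)) * ∫ y in K, nrm y ^ α * Real.exp (dotR d y) ∧
    (∫ y in K, nrm y ^ α * Real.exp (dotR d y))
      ≤ 2 * Real.pi * Real.Gamma (3 + α) / c ^ (3 + α) :=
  cone_weighted_exp_decay_general K hKmeas hKcone d hd c hc hdK α hα0 τ hτ
end
end

section
/- Let w₁, w₂, w₃ ∈ ℝ³ be linearly independent unit vectors, z a unit vector with z·w₁ = 0 and z·wⱼ < −κ for j = 2, 3 with κ ∈ (0,1), and let 0 < s ≤ κ/3. Set d_s = (z − s w₁)/√(1+s²), d^⊥ = w₁ × z, and for τ ≥ k ≥ 0 with τ > 0 set ρ = τ d_s + i√(τ²+k²) d^⊥. Then |τ³ ∫_{𝒦₀} e^{ρ·x} dx| > |w₁·(w₂ × w₃)| / (4s), where 𝒦₀ is the open cone generated by w₁, w₂, w₃. -/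
/-! Substituting `x = ∑ cⱼ wⱼ` turns the integral over the cone into
`|det w| ∏ⱼ ∫₀^∞ e^{c aⱼ} dc = |det w| ∏ⱼ (-aⱼ)⁻¹` with `aⱼ = ρ·wⱼ`, which is legitimate because
every `Re aⱼ` is negative. Since `z` and `w₁ × z` are orthogonal to `w₁`, the number
`a₁ = -τ s / √(1 + s²)` is real and `|a₁| < τ s`; for `j = 2, 3` the real and imaginary parts of
`aⱼ` have squares at most `2τ²` (using `k ≤ τ`), so `|aⱼ| ≤ 2τ`. Hence
`|τ³ ∫ e^{ρ·x} dx| = τ³ |det w| / ∏ |aⱼ| > |det w| / (4 s)`. -/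

open MeasureTheory Filter Set

noncomputable section

section Cone

variable {ι : Type*} [Fintype ι]

def openCone (w : ι → ι → ℝ) : Set (ι → ℝ) :=
  {x | ∃ c : ι → ℝ, (∀ j, 0 < c j) ∧ x = ∑ j, c j • w j}

theorem openCone_eq_image (w : ι → ι → ℝ) :
    openCone w = Fintype.linearCombination ℝ w '' univ.pi fun _ => Ioi 0 := by
  ext x
  simp [openCone, Fintype.linearCombination_apply, eq_comm]

theorem det_fintypeLinearCombination [DecidableEq ι] (w : ι → ι → ℝ) :
    LinearMap.det (Fintype.linearCombination ℝ w) = (Matrix.of w).det := by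
  rw [← Matrix.det_transpose, ← LinearMap.det_toLin', Matrix.toLin'_apply',
    Matrix.mulVecLin_transpose]
  congr 1
  refine LinearMap.ext fun c => ?_
  rw [Fintype.linearCombination_apply, Matrix.vecMulLinear_apply, Matrix.vecMul_eq_sum]
  rfl

theorem integral_pi_Ioi_prod_cexp_mul {a : ι → ℂ} (ha : ∀ j, (a j).re < 0) :
    ∫ c in univ.pi fun _ : ι => Ioi (0 : ℝ), ∏ j, Complex.exp (a j * c j) = ∏ j, -(a j)⁻¹ := by
  rw [volume_pi, Measure.restrict_pi_pi,
    integral_fintype_prod_eq_prod (fun j (t : ℝ) => Complex.exp (a j * t))]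
  refine Finset.prod_congr rfl fun j _ => ?_
  rw [integral_exp_mul_complex_Ioi (ha j)]
  simp [neg_div]

theorem integral_openCone_cexp [DecidableEq ι] {w : ι → ι → ℝ} (hw : LinearIndependent ℝ w)
    {ρ : ι → ℂ} (hρ : ∀ j, (ρ ⬝ᵥ fun i => (w j i : ℂ)).re < 0) :
    ∫ x in openCone w, Complex.exp (ρ ⬝ᵥ fun i => (x i : ℂ)) =
      |(Matrix.of w).det| * ∏ j, -(ρ ⬝ᵥ fun i => (w j i : ℂ))⁻¹ := by
  set T := (Fintype.linearCombination ℝ w).toContinuousLinearMap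
  have hS : MeasurableSet (univ.pi fun _ : ι => Ioi (0 : ℝ)) :=
    .univ_pi fun _ => measurableSet_Ioi
  have hexp (c : ι → ℝ) : Complex.exp (ρ ⬝ᵥ fun i => (T c i : ℂ)) =
      ∏ j, Complex.exp ((ρ ⬝ᵥ fun i => (w j i : ℂ)) * c j) := by
    rw [← Complex.exp_sum]
    congr 1
    simp only [T, LinearMap.coe_toContinuousLinearMap', Fintype.linearCombination_apply,
      Finset.sum_apply, Pi.smul_apply, smul_eq_mul, Complex.ofReal_sum, Complex.ofReal_mul,
      dotProduct, Finset.mul_sum, Finset.sum_mul]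
    rw [Finset.sum_comm]
    refine Finset.sum_congr rfl fun j _ => Finset.sum_congr rfl fun i _ => ?_
    ring
  rw [openCone_eq_image, show ⇑(Fintype.linearCombination ℝ w) = T from rfl,
    integral_image_eq_integral_abs_det_fderiv_smul volume hS
      (fun c _ => T.hasFDerivAt.hasFDerivWithinAt) hw.fintypeLinearCombination_injective.injOn]
  simp only [hexp, T, LinearMap.det_toContinuousLinearMap, det_fintypeLinearCombination,
    Complex.real_smul]
  rw [integral_const_mul, integral_pi_Ioi_prod_cexp_mul hρ]

end Cone

theorem dotR_eq_dotProduct (x y : Fin 3 → ℝ) : dotR x y = x ⬝ᵥ y := rfl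

theorem nrm_eq_sqrt_dotR (x : Fin 3 → ℝ) : nrm x = √(dotR x x) := by
  simp only [nrm, dotR, sq]

theorem dotR_self_eq_one {x : Fin 3 → ℝ} (hx : nrm x = 1) : dotR x x = 1 := by
  rwa [nrm_eq_sqrt_dotR, Real.sqrt_eq_one] at hx

theorem abs_dotR_le_nrm_mul_nrm (x y : Fin 3 → ℝ) : |dotR x y| ≤ nrm x * nrm y := by
  refine abs_le.2 ⟨?_, Real.sum_mul_le_sqrt_mul_sqrt _ x y⟩
  have := Real.sum_mul_le_sqrt_mul_sqrt Finset.univ (-x) y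
  simp only [Pi.neg_apply, neg_mul, Finset.sum_neg_distrib, neg_sq] at this
  exact neg_le.1 this

theorem abs_dotR_le_one {x y : Fin 3 → ℝ} (hx : nrm x = 1) (hy : nrm y = 1) :
    |dotR x y| ≤ 1 := by
  simpa [hx, hy] using abs_dotR_le_nrm_mul_nrm x y

theorem nrm_crossProduct_eq_one {x y : Fin 3 → ℝ} (hx : nrm x = 1) (hy : nrm y = 1)
    (hxy : dotR x y = 0) : nrm (crossProduct x y) = 1 := by
  rw [nrm_eq_sqrt_dotR, Real.sqrt_eq_one, dotR_eq_dotProduct, cross_dot_cross]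
  simp only [← dotR_eq_dotProduct, dotR_self_eq_one hx, dotR_self_eq_one hy, hxy]
  norm_num

theorem dotR_crossProduct_self (x y : Fin 3 → ℝ) : dotR (crossProduct x y) x = 0 := by
  rw [dotR_eq_dotProduct, dotProduct_comm, dot_self_cross]

theorem dotR_crossProduct_eq_det (w : Fin 3 → Fin 3 → ℝ) :
    dotR (w 0) (crossProduct (w 1) (w 2)) = (Matrix.of w).det := by
  rw [dotR_eq_dotProduct, triple_product_eq_det]
  congr 1
  ext i : 1
  fin_cases i <;> rfl

theorem dotR_mul_div_sub (τ s q : ℝ) (z v y : Fin 3 → ℝ) :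
    dotR (fun i => τ * ((z i - s * v i) / q)) y = τ * ((dotR z y - s * dotR v y) / q) := by
  simp only [dotR, Fin.sum_univ_three]
  ring

theorem dotR_const_mul (u : ℝ) (v y : Fin 3 → ℝ) : dotR (fun i => u * v i) y = u * dotR v y := by
  simp only [dotR, Finset.mul_sum, mul_assoc]

theorem dotC_toC (ρ : Fin 3 → ℂ) (x : Fin 3 → ℝ) : dotC ρ (toC x) = ρ ⬝ᵥ fun i => (x i : ℂ) :=
  rfl

theorem dotC_ofReal_add_I_mul (α β x : Fin 3 → ℝ) :
    dotC (fun i => (α i : ℂ) + Complex.I * (β i : ℂ)) (toC x) = ⟨dotR α x, dotR β x⟩ := by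
  apply Complex.ext <;> simp [dotC, toC, dotR]

theorem integral_openCone_cexp_dotC {w : Fin 3 → Fin 3 → ℝ} (hw : LinearIndependent ℝ w)
    {α β : Fin 3 → ℝ} (hα : ∀ j, dotR α (w j) < 0) :
    ∫ x in openCone w, Complex.exp (dotC (fun i => (α i : ℂ) + Complex.I * (β i : ℂ)) (toC x)) =
      |dotR (w 0) (crossProduct (w 1) (w 2))| *
        ∏ j, -(⟨dotR α (w j), dotR β (w j)⟩ : ℂ)⁻¹ := by
  rw [dotR_crossProduct_eq_det]
  simp only [← dotC_ofReal_add_I_mul, dotC_toC]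
  exact integral_openCone_cexp hw fun j => by
    rw [← dotC_toC, dotC_ofReal_add_I_mul]
    exact hα j

theorem sub_mul_neg_of_lt_neg {a b s κ : ℝ} (ha : a < -κ) (hb : |b| ≤ 1) (hs : 0 ≤ s)
    (hsκ : s ≤ κ) : a - s * b < 0 := by
  nlinarith [(abs_le.1 hb).1]

theorem abs_sub_mul_le {a b s : ℝ} (ha : |a| ≤ 1) (hb : |b| ≤ 1) (hs : 0 ≤ s) :
    |a - s * b| ≤ 1 + s := by
  calc |a - s * b| ≤ |a| + s * |b| := by
        simpa [abs_mul, abs_of_nonneg hs] using abs_sub a (s * b)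
    _ ≤ 1 + s := by nlinarith

theorem norm_le_two_mul_of_sq_le {x y t : ℝ} (ht : 0 ≤ t) (hx : x ^ 2 ≤ 2 * t ^ 2)
    (hy : y ^ 2 ≤ 2 * t ^ 2) : ‖(⟨x, y⟩ : ℂ)‖ ≤ 2 * t := by
  refine le_of_pow_le_pow_left₀ two_ne_zero (by positivity) ?_
  rw [Complex.sq_norm, Complex.normSq_mk]
  nlinarith

theorem sq_mul_div_sqrt_le {τ s p : ℝ} (hp : |p| ≤ 1 + s) :
    (τ * (p / √(1 + s ^ 2))) ^ 2 ≤ 2 * τ ^ 2 := by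
  rw [mul_pow, div_pow, Real.sq_sqrt (by positivity), mul_comm]
  refine mul_le_mul_of_nonneg_right ?_ (sq_nonneg τ)
  rw [div_le_iff₀ (by positivity)]
  nlinarith [sq_le_sq' (abs_le.1 hp).1 (abs_le.1 hp).2, sq_nonneg (1 - s)]

theorem sq_sqrt_mul_le {τ k c : ℝ} (hk : 0 ≤ k) (hkτ : k ≤ τ) (hc : |c| ≤ 1) :
    (√(τ ^ 2 + k ^ 2) * c) ^ 2 ≤ 2 * τ ^ 2 := by
  rw [mul_pow, Real.sq_sqrt (by positivity)]
  have : c ^ 2 ≤ 1 := by rwa [sq_le_one_iff_abs_le_one]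
  nlinarith [sq_nonneg c, mul_le_mul hkτ hkτ hk (hk.trans hkτ)]

theorem norm_mk_le_two_mul {τ k s a b c : ℝ} (hk : 0 ≤ k) (hkτ : k ≤ τ) (hs : 0 ≤ s)
    (ha : |a| ≤ 1) (hb : |b| ≤ 1) (hc : |c| ≤ 1) :
    ‖(⟨τ * ((a - s * b) / √(1 + s ^ 2)), √(τ ^ 2 + k ^ 2) * c⟩ : ℂ)‖ ≤ 2 * τ :=
  norm_le_two_mul_of_sq_le (hk.trans hkτ) (sq_mul_div_sqrt_le (abs_sub_mul_le ha hb hs))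
    (sq_sqrt_mul_le hk hkτ hc)

theorem norm_mk_neg_div_sqrt_lt {τ s : ℝ} (hτ : 0 < τ) (hs : 0 < s) :
    ‖(⟨τ * (-s / √(1 + s ^ 2)), 0⟩ : ℂ)‖ < τ * s := by
  have hq : 1 < √(1 + s ^ 2) := Real.lt_sqrt_of_sq_lt (by nlinarith)
  change ‖((τ * (-s / √(1 + s ^ 2)) : ℝ) : ℂ)‖ < τ * s
  rw [Complex.norm_real, Real.norm_eq_abs, abs_mul, abs_div, abs_neg, abs_of_pos hτ,
    abs_of_pos hs, abs_of_pos (by linarith), ← mul_div_assoc]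
  exact div_lt_self (by positivity) hq

theorem lt_norm_cube_mul_prod_neg_inv {D s τ : ℝ} (hD : 0 < D) (hs : 0 < s) (hτ : 0 < τ)
    {a : Fin 3 → ℂ} (ha : ∀ j, a j ≠ 0) (h0 : ‖a 0‖ < τ * s) (h1 : ‖a 1‖ ≤ 2 * τ)
    (h2 : ‖a 2‖ ≤ 2 * τ) :
    D / (4 * s) < ‖(τ : ℂ) ^ 3 * (D * ∏ j, -(a j)⁻¹)‖ := by
  have hprod : ‖a 0‖ * ‖a 1‖ * ‖a 2‖ < τ * s * (2 * τ) * (2 * τ) := by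
    calc ‖a 0‖ * ‖a 1‖ * ‖a 2‖ ≤ ‖a 0‖ * (2 * τ) * (2 * τ) := by gcongr
      _ < τ * s * (2 * τ) * (2 * τ) := by gcongr
  have hpos : 0 < ‖a 0‖ * ‖a 1‖ * ‖a 2‖ := by
    have := fun j => norm_pos_iff.2 (ha j)
    exact mul_pos (mul_pos (this 0) (this 1)) (this 2)
  calc D / (4 * s) = τ ^ 3 * D / (τ * s * (2 * τ) * (2 * τ)) := by field_simp; ring
    _ < τ ^ 3 * D / (‖a 0‖ * ‖a 1‖ * ‖a 2‖) := by gcongr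
    _ = ‖(τ : ℂ) ^ 3 * (D * ∏ j, -(a j)⁻¹)‖ := by
      rw [norm_mul, norm_mul, norm_pow, norm_prod, Complex.norm_of_nonneg hτ.le,
        Complex.norm_of_nonneg hD.le, Fin.prod_univ_three]
      simp only [norm_neg, norm_inv]
      field_simp

theorem tau_cubed_integral_lower_bound_general
    (w : Fin 3 → (Fin 3 → ℝ)) (hw : ∀ j, nrm (w j) = 1)
    (hli : LinearIndependent ℝ w)
    (z : Fin 3 → ℝ) (hz : nrm z = 1) (horth : dotR z (w 0) = 0)
    (κ : ℝ)
    (hzw1 : dotR z (w 1) < -κ) (hzw2 : dotR z (w 2) < -κ)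
    (s : ℝ) (hs0 : 0 < s) (hs1 : s ≤ κ / 3)
    (k τ : ℝ) (hk : 0 ≤ k) (hτk : k ≤ τ) (hτ : 0 < τ) :
    |dotR (w 0) (crossProduct (w 1) (w 2))| / (4 * s) <
      ‖((τ : ℂ) ^ 3 *
        ∫ x in {x | ∃ c : Fin 3 → ℝ, (∀ j, 0 < c j) ∧ x = ∑ j, c j • w j},
          Complex.exp
            (dotC (fun i => (τ * ((z i - s * w 0 i) / Real.sqrt (1 + s ^ 2)) : ℝ)
                    + Complex.I * (Real.sqrt (τ ^ 2 + k ^ 2) * (crossProduct (w 0) z) i : ℝ))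
              (toC x)))‖ := by
  have hww (j) : |dotR (w 0) (w j)| ≤ 1 := abs_dotR_le_one (hw 0) (hw j)
  have hzw (j) : |dotR z (w j)| ≤ 1 := abs_dotR_le_one hz (hw j)
  have hcross : nrm (crossProduct (w 0) z) = 1 :=
    nrm_crossProduct_eq_one (hw 0) hz (by rwa [dotR_eq_dotProduct, dotProduct_comm])
  have hcw (j) : |dotR (crossProduct (w 0) z) (w j)| ≤ 1 := abs_dotR_le_one hcross (hw j)
  have hre (j) : τ * ((dotR z (w j) - s * dotR (w 0) (w j)) / √(1 + s ^ 2)) < 0 := by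
    refine mul_neg_of_pos_of_neg hτ (div_neg_of_neg_of_pos ?_ (by positivity))
    fin_cases j
    · simp [horth, dotR_self_eq_one (hw 0), hs0]
    · exact sub_mul_neg_of_lt_neg hzw1 (hww 1) hs0.le (by linarith)
    · exact sub_mul_neg_of_lt_neg hzw2 (hww 2) hs0.le (by linarith)
  have hdet : 0 < |dotR (w 0) (crossProduct (w 1) (w 2))| := by
    rw [dotR_crossProduct_eq_det, abs_pos]
    exact ((Matrix.isUnit_iff_isUnit_det _).1
      (Matrix.linearIndependent_rows_iff_isUnit.1 hli)).ne_zero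
  rw [← openCone.eq_1, integral_openCone_cexp_dotC hli]
  · simp only [dotR_mul_div_sub, dotR_const_mul]
    refine lt_norm_cube_mul_prod_neg_inv hdet hs0 hτ (fun j h => (hre j).ne (congrArg Complex.re h))
      ?_ (norm_mk_le_two_mul hk hτk hs0.le (hzw 1) (hww 1) (hcw 1))
      (norm_mk_le_two_mul hk hτk hs0.le (hzw 2) (hww 2) (hcw 2))
    simpa [horth, dotR_self_eq_one (hw 0), dotR_crossProduct_self] using
      norm_mk_neg_div_sqrt_lt hτ hs0
  · simpa only [dotR_mul_div_sub] using hre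

/-- lower bound `|τ³ ∫_{𝒦₀} e^{ρ·x} dx| > |w₁·(w₂×w₃)|/(4s)`. -/
theorem tau_cubed_integral_lower_bound
    (w : Fin 3 → (Fin 3 → ℝ)) (hw : ∀ j, nrm (w j) = 1)
    (hli : LinearIndependent ℝ w)
    (z : Fin 3 → ℝ) (hz : nrm z = 1) (horth : dotR z (w 0) = 0)
    (κ : ℝ) (hκ0 : 0 < κ) (hκ1 : κ < 1)
    (hzw1 : dotR z (w 1) < -κ) (hzw2 : dotR z (w 2) < -κ)
    (s : ℝ) (hs0 : 0 < s) (hs1 : s ≤ κ / 3)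
    (k τ : ℝ) (hk : 0 ≤ k) (hτk : k ≤ τ) (hτ : 0 < τ) :
    |dotR (w 0) (crossProduct (w 1) (w 2))| / (4 * s) <
      ‖((τ : ℂ) ^ 3 *
        ∫ x in {x | ∃ c : Fin 3 → ℝ, (∀ j, 0 < c j) ∧ x = ∑ j, c j • w j},
          Complex.exp
            (dotC (fun i => (τ * ((z i - s * w 0 i) / Real.sqrt (1 + s ^ 2)) : ℝ)
                    + Complex.I * (Real.sqrt (τ ^ 2 + k ^ 2) * (crossProduct (w 0) z) i : ℝ))
              (toC x)))‖ :=
  tau_cubed_integral_lower_bound_general w hw hli z hz horth κ hzw1 hzw2 s hs0 hs1 k τ hk hτk hτ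
end
end
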